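/- arXiv:1306.3904 — 2 statements merged into one kernel-verified Lean document; each statement's English description precedes it below -/
import Mathlib

section
/- Let P and Q be orthogonal projections on a Hilbert space H with ‖P − Q‖ < 1. Then the Kato–Nagy operator W := (1 − (P − Q)²)^{−1/2} (QP + (1−Q)(1−P)) is unitary and satisfies Q = W P W⁻¹. -/
/-!
Write `a = (P - Q)²`, `U = QP + (1 - Q)(1 - P)` and `V = PQ + (1 - P)(1 - Q)`, which is `U*`.
Idempotency alone gives `U P = Q U` and `U V = V U = 1 - a`, and `a` commutes with `P`, `Q`
and `U`. So `W = S U` with `S = (1 - a)^{-1/2}` is unitary and intertwines `P` with `Q` as soon as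
`S² (1 - a) = 1`. Squaring the binomial series by the Cauchy product, this reduces to the
Chu–Vandermonde identity `∑_{i+j=n} C(-1/2, i) C(-1/2, j) = C(-1, n) = (-1)ⁿ`, which turns `S²`
into the geometric series `∑ aⁿ = (1 - a)⁻¹`.
-/

/-- Generalized binomial coefficient `x choose n` for real `x`. -/
noncomputable def genBinom (x : ℝ) (n : ℕ) : ℝ :=
  (∏ i ∈ Finset.range n, (x - i)) / n.factorial

open Finset

open Polynomial in
lemma genBinom_eq_choose (x : ℝ) (n : ℕ) : genBinom x n = Ring.choose x n := by
  rw [Ring.choose_eq_smul, genBinom, smul_eq_mul, ← descPochhammer_eval_eq_prod_range,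
    ← descPochhammer_map (Int.castRingHom ℝ), eval_map, ← eval₂_smulOneHom_eq_smeval,
    div_eq_inv_mul]
  congr 2
  ext
  simp

lemma Ring.choose_neg_one {R : Type*} [Ring R] [BinomialRing R] (n : ℕ) :
    Ring.choose (-1 : R) n = (-1) ^ n := by
  rw [Ring.choose_neg, add_sub_cancel_left, Ring.choose_natCast, Nat.choose_self, Nat.cast_one,
    Units.smul_def, Int.coe_negOnePow_natCast, zsmul_one]
  push_cast
  rfl

lemma sum_antidiagonal_genBinom_neg_half_mul (n : ℕ) :
    ∑ ij ∈ antidiagonal n, genBinom (-(1/2)) ij.1 * genBinom (-(1/2)) ij.2 = (-1) ^ n := by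
  simp only [genBinom_eq_choose]
  rw [← Ring.add_choose_eq n (Commute.refl _)]
  norm_num [Ring.choose_neg_one]

lemma abs_genBinom_neg_half_le_one (n : ℕ) : |genBinom (-(1/2)) n| ≤ 1 := by
  rw [genBinom, abs_div, abs_prod, Nat.abs_cast, div_le_one (by positivity),
    ← prod_range_add_one_eq_factorial, Nat.cast_prod]
  gcongr with i
  have : (0 : ℝ) ≤ i := i.cast_nonneg
  rw [abs_le]
  push_cast
  constructor <;> linarith

lemma norm_mul_self_lt_one {R : Type*} [NormedRing R] {x : R} (hx : ‖x‖ < 1) : ‖x * x‖ < 1 :=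
  (norm_mul_le x x).trans_lt (mul_lt_one_of_nonneg_of_lt_one_left (norm_nonneg x) hx hx.le)

section InvSqrtOneSub

variable {R : Type*} [NormedRing R] [NormedAlgebra ℂ R]

noncomputable def invSqrtOneSub (a : R) : R :=
  ∑' n : ℕ, (genBinom (-(1/2)) n : ℂ) • (-a) ^ n

lemma summable_norm_invSqrtOneSub {a : R} (ha : ‖a‖ < 1) :
    Summable fun n : ℕ ↦ ‖(genBinom (-(1/2)) n : ℂ) • (-a) ^ n‖ := by
  refine .of_nonneg_of_le (fun _ ↦ norm_nonneg _) (fun n ↦ ?_)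
    (summable_norm_geometric_of_norm_lt_one (r := -a) (by rwa [norm_neg]))
  calc ‖(genBinom (-(1/2)) n : ℂ) • (-a) ^ n‖
      ≤ ‖(genBinom (-(1/2)) n : ℂ)‖ * ‖(-a) ^ n‖ := norm_smul_le _ _
    _ ≤ 1 * ‖(-a) ^ n‖ := by
      gcongr
      rw [Complex.norm_real, Real.norm_eq_abs]
      exact abs_genBinom_neg_half_le_one n
    _ = ‖(-a) ^ n‖ := one_mul _

lemma invSqrtOneSub_mul_self [CompleteSpace R] {a : R} (ha : ‖a‖ < 1) :
    invSqrtOneSub a * invSqrtOneSub a = ∑' n : ℕ, a ^ n := by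
  rw [invSqrtOneSub, tsum_mul_tsum_eq_tsum_sum_antidiagonal_of_summable_norm
    (summable_norm_invSqrtOneSub ha) (summable_norm_invSqrtOneSub ha)]
  refine tsum_congr fun n ↦ ?_
  calc ∑ ij ∈ antidiagonal n,
        (genBinom (-(1/2)) ij.1 : ℂ) • (-a) ^ ij.1 * (genBinom (-(1/2)) ij.2 : ℂ) • (-a) ^ ij.2
      = ((∑ ij ∈ antidiagonal n, genBinom (-(1/2)) ij.1 * genBinom (-(1/2)) ij.2 : ℝ) : ℂ) •
          (-a) ^ n := by
        rw [Complex.ofReal_sum, sum_smul]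
        refine sum_congr rfl fun ij hij ↦ ?_
        rw [smul_mul_smul_comm, ← pow_add, mem_antidiagonal.mp hij, Complex.ofReal_mul]
    _ = a ^ n := by
        rw [sum_antidiagonal_genBinom_neg_half_mul, ← neg_one_smul ℂ a, smul_pow, smul_smul]
        push_cast
        simp [← mul_pow]

lemma Commute.invSqrtOneSub_left {a b : R} (h : Commute a b) : Commute (invSqrtOneSub a) b :=
  .tsum_left b fun n ↦ (h.neg_left.pow_left n).smul_left _

lemma star_invSqrtOneSub [StarRing R] [StarModule ℂ R] [ContinuousStar R] (a : R) :
    star (invSqrtOneSub a) = invSqrtOneSub (star a) := by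
  rw [invSqrtOneSub, tsum_star]
  simp only [star_smul, star_pow, star_neg, Complex.star_def, Complex.conj_ofReal]
  rfl

lemma one_sub_mul_invSqrtOneSub_mul_self [CompleteSpace R] {a : R} (ha : ‖a‖ < 1) :
    (1 - a) * (invSqrtOneSub a * invSqrtOneSub a) = 1 := by
  rw [invSqrtOneSub_mul_self ha, mul_neg_geom_series a ha]

lemma invSqrtOneSub_mul_one_sub_mul [CompleteSpace R] {a : R} (ha : ‖a‖ < 1) :
    invSqrtOneSub a * (1 - a) * invSqrtOneSub a = 1 := by
  have hSa : Commute (invSqrtOneSub a) (1 - a) :=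
    ((Commute.one_right a).sub_right (.refl a)).invSqrtOneSub_left
  rw [hSa.eq, mul_assoc, one_sub_mul_invSqrtOneSub_mul_self ha]

end InvSqrtOneSub

section Projections

variable {R : Type*} [Ring R] {p q : R}

def projIntertwiner (p q : R) : R := q * p + (1 - q) * (1 - p)

lemma IsIdempotentElem.commute_sub_mul_self_left (hp : IsIdempotentElem p)
    (hq : IsIdempotentElem q) : Commute ((p - q) * (p - q)) p := by
  simp only [Commute, SemiconjBy, sub_mul, mul_sub, mul_assoc, hp.eq, hq.eq, hp.mul_self_mul]
  abel

lemma IsIdempotentElem.commute_sub_mul_self_right (hp : IsIdempotentElem p)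
    (hq : IsIdempotentElem q) : Commute ((p - q) * (p - q)) q := by
  rw [← neg_sub q p, neg_mul_neg]
  exact hq.commute_sub_mul_self_left hp

lemma projIntertwiner_mul_swap (hp : IsIdempotentElem p) (hq : IsIdempotentElem q) :
    projIntertwiner p q * projIntertwiner q p = 1 - (p - q) * (p - q) := by
  simp only [projIntertwiner, sub_mul, mul_sub, add_mul, mul_add, one_mul, mul_one, mul_assoc,
    hp.eq, hq.eq, hp.mul_self_mul]
  abel

lemma semiconjBy_projIntertwiner (hp : IsIdempotentElem p) (hq : IsIdempotentElem q) :
    SemiconjBy (projIntertwiner p q) p q := by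
  simp only [SemiconjBy, projIntertwiner, sub_mul, mul_sub, add_mul, mul_add, one_mul, mul_one,
    mul_assoc, hp.eq, hq.eq, hq.mul_self_mul]
  abel

lemma commute_sub_mul_self_projIntertwiner (hp : IsIdempotentElem p) (hq : IsIdempotentElem q) :
    Commute ((p - q) * (p - q)) (projIntertwiner p q) := by
  have hcp := hp.commute_sub_mul_self_left hq
  have hcq := hp.commute_sub_mul_self_right hq
  exact (hcq.mul_right hcp).add_right
    (((Commute.one_right _).sub_right hcq).mul_right ((Commute.one_right _).sub_right hcp))

lemma IsSelfAdjoint.star_projIntertwiner [StarRing R] (hp : IsSelfAdjoint p)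
    (hq : IsSelfAdjoint q) : star (projIntertwiner p q) = projIntertwiner q p := by
  simp only [projIntertwiner, star_add, star_mul, star_sub, star_one, hp.star_eq, hq.star_eq]

end Projections

section KatoNagy

variable {R : Type*} [NormedRing R] [NormedAlgebra ℂ R] [StarRing R] [StarModule ℂ R]
  [ContinuousStar R] {p q : R}

noncomputable def katoNagy (p q : R) : R :=
  invSqrtOneSub ((p - q) * (p - q)) * projIntertwiner p q

lemma star_katoNagy (hp : IsSelfAdjoint p) (hq : IsSelfAdjoint q) :
    star (katoNagy p q) = projIntertwiner q p * invSqrtOneSub ((p - q) * (p - q)) := by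
  rw [katoNagy, star_mul, hp.star_projIntertwiner hq, star_invSqrtOneSub, star_mul,
    (hp.sub hq).star_eq]

theorem katoNagy_mem_unitary [CompleteSpace R] (hp : IsStarProjection p)
    (hq : IsStarProjection q) (hpq : ‖p - q‖ < 1) : katoNagy p q ∈ unitary R := by
  set S := invSqrtOneSub ((p - q) * (p - q))
  set U := projIntertwiner p q
  have hSU : Commute S U := Commute.invSqrtOneSub_left <|
    commute_sub_mul_self_projIntertwiner hp.isIdempotentElem hq.isIdempotentElem
  rw [Unitary.mem_iff, star_katoNagy hp.isSelfAdjoint hq.isSelfAdjoint, katoNagy]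
  constructor
  · calc projIntertwiner q p * S * (S * U) = projIntertwiner q p * U * (S * S) := by
          rw [mul_assoc, ← mul_assoc S, (hSU.mul_left hSU).eq, mul_assoc]
      _ = 1 := by
          rw [projIntertwiner_mul_swap hq.isIdempotentElem hp.isIdempotentElem, ← neg_sub p q,
            neg_mul_neg, one_sub_mul_invSqrtOneSub_mul_self (norm_mul_self_lt_one hpq)]
  · rw [mul_assoc, ← mul_assoc U,
      projIntertwiner_mul_swap hp.isIdempotentElem hq.isIdempotentElem, ← mul_assoc,
      invSqrtOneSub_mul_one_sub_mul (norm_mul_self_lt_one hpq)]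

theorem katoNagy_mul_mul_star [CompleteSpace R] (hp : IsStarProjection p)
    (hq : IsStarProjection q) (hpq : ‖p - q‖ < 1) :
    katoNagy p q * p * star (katoNagy p q) = q := by
  set S := invSqrtOneSub ((p - q) * (p - q))
  have hSq : Commute S q :=
    (hp.isIdempotentElem.commute_sub_mul_self_right hq.isIdempotentElem).invSqrtOneSub_left
  rw [star_katoNagy hp.isSelfAdjoint hq.isSelfAdjoint, katoNagy]
  calc S * projIntertwiner p q * p * (projIntertwiner q p * S)
      = q * (S * (projIntertwiner p q * projIntertwiner q p) * S) := by
        rw [mul_assoc S, (semiconjBy_projIntertwiner hp.isIdempotentElem hq.isIdempotentElem).eq,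
          ← mul_assoc S q, hSq.eq]
        simp only [mul_assoc]
    _ = q := by
        rw [projIntertwiner_mul_swap hp.isIdempotentElem hq.isIdempotentElem,
          invSqrtOneSub_mul_one_sub_mul (norm_mul_self_lt_one hpq), mul_one]

end KatoNagy

/-- Kato–Nagy. If `P, Q` are orthogonal projections on a complex Hilbert
space with `‖P - Q‖ < 1`, then the Kato–Nagy operator
`W = (1 - (P - Q)²)^{-1/2} (QP + (1-Q)(1-P))` (inverse square root defined via the
binomial series) is unitary, and `Q = W P W⁻¹` (with `W⁻¹ = W*`). -/
theorem kato_nagy_unitary_intertwiner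
    {H : Type*} [NormedAddCommGroup H] [InnerProductSpace ℂ H] [CompleteSpace H]
    (P Q : H →L[ℂ] H)
    (hP : IsIdempotentElem P) (hPsa : IsSelfAdjoint P)
    (hQ : IsIdempotentElem Q) (hQsa : IsSelfAdjoint Q)
    (hPQ : ‖P - Q‖ < 1)
    (W : H →L[ℂ] H)
    (hW : W = (∑' n : ℕ, (genBinom (-(1/2)) n : ℂ) • (-((P - Q) * (P - Q))) ^ n) *
      (Q * P + (1 - Q) * (1 - P))) :
    W * ContinuousLinearMap.adjoint W = 1 ∧
    ContinuousLinearMap.adjoint W * W = 1 ∧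
    Q = W * P * ContinuousLinearMap.adjoint W := by
  obtain rfl : W = katoNagy P Q := hW
  have hPp : IsStarProjection P := ⟨hP, hPsa⟩
  have hQp : IsStarProjection Q := ⟨hQ, hQsa⟩
  have hU := katoNagy_mem_unitary hPp hQp hPQ
  simp only [← ContinuousLinearMap.star_eq_adjoint]
  exact ⟨Unitary.mul_star_self_of_mem hU, Unitary.star_mul_self_of_mem hU,
    (katoNagy_mul_mul_star hPp hQp hPQ).symm⟩
end

section
/- Let Ψ : S¹ → ℂ² be continuous with ‖Ψ(k)‖ = 1 and components ψ₁(k), ψ₂(k) both nonvanishing for all k ∈ S¹, and suppose |ψ₁(k)| = |ψ₂(k)| for all k and ψ₁(k) is real and positive. Then the holonomy of the Berry connection, Hol = exp(−∮_{S¹} ⟨Ψ(k), ∂_θ Ψ(k)⟩ dθ), equals e^{−iπ n_w}, where n_w = deg(g) is the winding number of g(k) = ψ₂(k)/ψ₁(k) · |ψ₁(k)|/|ψ₂(k)| : S¹ → U(1). -/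
open Complex Real intervalIntegral

/-! The hypotheses pin the first component down to the constant `1/√2`, so `Ψ = (1/√2)(1, g)`.
The Berry connection is then half the winding form `ḡ g'`, and its loop integral is
`½ · 2πi n_w = iπ n_w`. -/

theorem Complex.eq_sqrt_half_of_norm_sq_add_norm_sq_eq_one {z w : ℂ}
    (hnorm : ‖z‖ ^ 2 + ‖w‖ ^ 2 = 1) (hmod : ‖z‖ = ‖w‖) (him : z.im = 0) (hre : 0 ≤ z.re) :
    z = (√(1 / 2) : ℝ) := by
  have hz : z = ‖z‖ := by
    rw [← abs_re_eq_norm.2 him, abs_of_nonneg hre]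
    exact Complex.ext rfl him
  have hsq : ‖z‖ ^ 2 = 1 / 2 := by rw [← hmod] at hnorm; linarith
  rw [hz, ← hsq, Real.sqrt_sq (norm_nonneg z)]

theorem conj_mul_deriv_const_mul (a : ℂ) (g : ℝ → ℂ) (θ : ℝ) :
    starRingEnd ℂ (a * g θ) * deriv (fun t => a * g t) θ =
      normSq a * (starRingEnd ℂ (g θ) * deriv g θ) := by
  rw [deriv_const_mul_field', map_mul, ← mul_conj]
  ring

theorem berry_integrand_eq_of_const_fst (Ψ : ℝ → Fin 2 → ℂ) (c : ℂ) (g : ℝ → ℂ)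
    (h0 : ∀ θ, Ψ θ 0 = c) (h1 : ∀ θ, Ψ θ 1 = c * g θ) (θ : ℝ) :
    ∑ j : Fin 2, starRingEnd ℂ (Ψ θ j) * deriv (fun t => Ψ t j) θ =
      normSq c * (starRingEnd ℂ (g θ) * deriv g θ) := by
  simp only [Fin.sum_univ_two, h0, h1, deriv_const, mul_zero, zero_add]
  exact conj_mul_deriv_const_mul c g θ

theorem berry_holonomy_eq_winding_general
    (Ψ : ℝ → Fin 2 → ℂ)
    (hnorm : ∀ θ : ℝ, ‖Ψ θ 0‖ ^ 2 + ‖Ψ θ 1‖ ^ 2 = 1)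
    (hmod : ∀ θ : ℝ, ‖Ψ θ 0‖ = ‖Ψ θ 1‖)
    (hreal : ∀ θ : ℝ, (Ψ θ 0).im = 0 ∧ 0 < (Ψ θ 0).re)
    (g : ℝ → ℂ) (hg : g = fun θ => Ψ θ 1 / Ψ θ 0)
    (nw : ℤ)
    (hnw : (nw : ℂ) = (1 / (2 * π * I)) *
      ∫ θ in (0:ℝ)..(2 * π), starRingEnd ℂ (g θ) * deriv g θ) :
    Complex.exp (-∫ θ in (0:ℝ)..(2 * π),
        ∑ j : Fin 2, starRingEnd ℂ (Ψ θ j) * deriv (fun t => Ψ t j) θ) =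
      Complex.exp (-(I * π * nw)) := by
  set c : ℂ := ((√(1 / 2) : ℝ) : ℂ)
  have h0 : ∀ θ, Ψ θ 0 = c := fun θ =>
    Complex.eq_sqrt_half_of_norm_sq_add_norm_sq_eq_one (hnorm θ) (hmod θ) (hreal θ).1
      (hreal θ).2.le
  have h1 : ∀ θ, Ψ θ 1 = c * g θ := fun θ => by
    rw [hg, ← h0 θ, mul_div_cancel₀ _ (Complex.ne_zero_of_re_pos (hreal θ).2)]
  have hc : normSq c = 1 / 2 := by
    rw [normSq_ofReal, Real.mul_self_sqrt (by norm_num)]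
  have hwind : ∫ θ in (0:ℝ)..(2 * π), starRingEnd ℂ (g θ) * deriv g θ = 2 * π * I * nw := by
    rw [hnw]; field_simp
  simp only [berry_integrand_eq_of_const_fst Ψ c g h0 h1, integral_const_mul, hwind, hc]
  congr 1
  push_cast
  ring

/-- let `Ψ : S¹ → ℂ²` be (C¹-)continuous, unit-norm, with both
components nonvanishing, equal moduli, and `ψ₁` real and positive.  Then the Berry
holonomy `exp(-∮ ⟨Ψ, ∂_θ Ψ⟩ dθ)` equals `e^{-iπ n_w}`, where `n_w = deg(g)` is the
winding number of `g = phase(ψ₂/ψ₁) : S¹ → U(1)`. -/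
theorem berry_holonomy_eq_winding
    (Ψ : ℝ → Fin 2 → ℂ) (hΨ : ContDiff ℝ 1 Ψ)
    (hper : ∀ θ : ℝ, Ψ (θ + 2 * π) = Ψ θ)
    (hne : ∀ θ : ℝ, Ψ θ 0 ≠ 0 ∧ Ψ θ 1 ≠ 0)
    (hnorm : ∀ θ : ℝ, ‖Ψ θ 0‖ ^ 2 + ‖Ψ θ 1‖ ^ 2 = 1)
    (hmod : ∀ θ : ℝ, ‖Ψ θ 0‖ = ‖Ψ θ 1‖)
    (hreal : ∀ θ : ℝ, (Ψ θ 0).im = 0 ∧ 0 < (Ψ θ 0).re)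
    (g : ℝ → ℂ) (hg : g = fun θ => Ψ θ 1 / Ψ θ 0)
    (nw : ℤ)
    (hnw : (nw : ℂ) = (1 / (2 * π * I)) *
      ∫ θ in (0:ℝ)..(2 * π), starRingEnd ℂ (g θ) * deriv g θ) :
    Complex.exp (-∫ θ in (0:ℝ)..(2 * π),
        ∑ j : Fin 2, starRingEnd ℂ (Ψ θ j) * deriv (fun t => Ψ t j) θ) =
      Complex.exp (-(I * π * nw)) :=
  berry_holonomy_eq_winding_general Ψ hnorm hmod hreal g hg nw hnw
end
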